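/- Let μ be a CM probability measure on ℤ with representing measure ν. Then ν satisfies the condition (∃L>0, ∀x∈[0,1): ∫₀ˣ t/(1−t)² ν(dt) ≤ (L/(1−x)) ∫ₓ¹ t/(1−t) ν(dt)) if and only if there exists D > 0 such that Σ_{k=1}^{n} k μ(k) ≤ D n Σ_{k≥n} μ(k) for all n ≥ 1. -/

import Mathlib

/-!
Write `S_n(t) = ∑_{k=1}^n k tᵏ` (`weightedGeomSum n t`), so that `∑_{k ≤ n} k μ(k) = ∫ S_n dν` and
`∑_{k ≥ n} μ(k) = ∫ tⁿ/(1-t) dν`. The identity `S_n(t)(1-t)² = t(1 - tⁿ(1 + n(1-t)))` gives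
`S_n(t) ≤ min (t/(1-t)²) (n t/(1-t))`, and, since `tⁿ ≤ e^{-n(1-t)}`, also
`S_n(t) ≥ (1 - ε) t/(1-t)²` as soon as `n(1-t)` is large.

If the integral condition holds, split `[0,1]` at `x = n/(n+1)`: below `x` use
`S_n ≤ t/(1-t)²` and the condition, above `x` use `S_n ≤ n t/(1-t)` and `t ≤ e tⁿ`.
Conversely, given `x`, take `n ≈ M/(1-x)` with `M` large. On `[0,x]` the function `S_n` is then
comparable to `t/(1-t)²`, while `n tⁿ/(1-t)` is a small multiple of `t/(1-t)²`, so that part of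
the right-hand side of the coefficient condition is absorbed into the left-hand side.
-/

open MeasureTheory Set Real

def weightedGeomSum (n : ℕ) (t : ℝ) : ℝ :=
  ∑ k ∈ Finset.Icc 1 n, (k : ℝ) * t ^ k

theorem continuous_weightedGeomSum (n : ℕ) : Continuous (weightedGeomSum n) := by
  unfold weightedGeomSum
  fun_prop

theorem weightedGeomSum_nonneg (n : ℕ) {t : ℝ} (ht : 0 ≤ t) : 0 ≤ weightedGeomSum n t :=
  Finset.sum_nonneg fun k _ => by positivity

theorem weightedGeomSum_mul_one_sub_sq (n : ℕ) (t : ℝ) :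
    weightedGeomSum n t * (1 - t) ^ 2 = t * (1 - t ^ n * (1 + n * (1 - t))) := by
  induction n with
  | zero => simp [weightedGeomSum]
  | succ m ih =>
    rw [weightedGeomSum, Finset.sum_Icc_succ_top (by omega), add_mul, ← weightedGeomSum, ih]
    push_cast
    ring

section
variable {n : ℕ} {t : ℝ}

theorem weightedGeomSum_le_div_one_sub_sq (ht0 : 0 ≤ t) (ht1 : t < 1) :
    weightedGeomSum n t ≤ t / (1 - t) ^ 2 := by
  have hpos : 0 < (1 - t) ^ 2 := by nlinarith
  rw [le_div_iff₀ hpos, weightedGeomSum_mul_one_sub_sq]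
  have hn1t : 0 ≤ (n : ℝ) * (1 - t) := mul_nonneg n.cast_nonneg (by linarith)
  have hrem : 0 ≤ t ^ n * (1 + n * (1 - t)) := by positivity
  nlinarith

theorem weightedGeomSum_le_mul_div_one_sub (ht0 : 0 ≤ t) (ht1 : t < 1) :
    weightedGeomSum n t ≤ n * (t / (1 - t)) := by
  have hpos : 0 < 1 - t := by linarith
  rw [← mul_le_mul_iff_left₀ (pow_pos hpos 2), weightedGeomSum_mul_one_sub_sq]
  have hbernoulli : 1 - t ^ n ≤ n * (1 - t) := by
    have := one_add_mul_le_pow (show (-2 : ℝ) ≤ t - 1 by linarith) n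
    simp only [add_sub_cancel] at this
    linarith
  have : 0 ≤ t ^ n * (n * (1 - t)) := by positivity
  calc t * (1 - t ^ n * (1 + n * (1 - t))) ≤ t * (n * (1 - t)) := by nlinarith
    _ = n * (t / (1 - t)) * (1 - t) ^ 2 := by field_simp

theorem mul_div_one_sub_sq_le_weightedGeomSum {ε : ℝ} (ht0 : 0 ≤ t) (ht1 : t < 1)
    (hε : t ^ n * (1 + n * (1 - t)) ≤ ε) :
    (1 - ε) * (t / (1 - t) ^ 2) ≤ weightedGeomSum n t := by
  have hpos : 0 < (1 - t) ^ 2 := by nlinarith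
  rw [mul_div_assoc', div_le_iff₀ hpos, weightedGeomSum_mul_one_sub_sq]
  nlinarith

theorem succ_mul_pow_succ_div_le {ε : ℝ} (ht0 : 0 ≤ t) (ht1 : t < 1)
    (hε : t ^ n * (1 + n * (1 - t)) ≤ ε) :
    (n + 1) * (t ^ (n + 1) / (1 - t)) ≤ ε * (t / (1 - t) ^ 2) := by
  have hpos : 0 < 1 - t := by linarith
  have key : (n + 1) * (1 - t) * t ^ n ≤ ε := by
    nlinarith [pow_nonneg ht0 n]
  calc (n + 1) * (t ^ (n + 1) / (1 - t))
      = t * ((n + 1) * (1 - t) * t ^ n) / (1 - t) ^ 2 := by field_simp; ring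
    _ ≤ t * ε / (1 - t) ^ 2 := by gcongr
    _ = ε * (t / (1 - t) ^ 2) := by ring

theorem pow_le_exp_neg_mul_one_sub (ht : 0 ≤ t) : t ^ n ≤ exp (-(n * (1 - t))) := by
  calc t ^ n ≤ exp (-(1 - t)) ^ n := by
        gcongr
        linarith [add_one_le_exp (-(1 - t))]
    _ = exp (-(n * (1 - t))) := by rw [← exp_nat_mul]; ring_nf

theorem pow_mul_one_add_le {M : ℝ} (ht : 0 ≤ t) (hM0 : 0 ≤ M) (hM : M ≤ n * (1 - t)) :
    t ^ n * (1 + n * (1 - t)) ≤ (1 + M) * exp (-M) := by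
  set u : ℝ := n * (1 - t)
  have hdecay : 1 + u ≤ (1 + M) * exp (u - M) := by
    nlinarith [add_one_le_exp (u - M)]
  calc t ^ n * (1 + u) ≤ exp (-u) * ((1 + M) * exp (u - M)) := by
        gcongr
        · linarith
        · exact pow_le_exp_neg_mul_one_sub ht
    _ = (1 + M) * exp (-M) := by rw [mul_left_comm, ← exp_add]; ring_nf

theorem one_add_mul_exp_neg_le {M : ℝ} (hM : 0 < M) : (1 + M) * exp (-M) ≤ 2 / M := by
  rw [exp_neg, ← div_eq_mul_inv, div_le_div_iff₀ (exp_pos M) hM]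
  nlinarith [quadratic_le_exp_of_nonneg hM.le]

theorem one_le_exp_one_mul_pow (ht : (n : ℝ) / (n + 1) ≤ t) : 1 ≤ exp 1 * t ^ n := by
  rcases n.eq_zero_or_pos with rfl | hn
  · simp
  have hn' : (0 : ℝ) < n := by exact_mod_cast hn
  have ht0 : 0 ≤ t := le_trans (by positivity) ht
  have hstep : 1 ≤ t * exp (1 / n) := by
    have : 1 ≤ t * (1 / n + 1) := by
      rw [div_le_iff₀ (by positivity)] at ht
      field_simp
      linarith
    nlinarith [mul_le_mul_of_nonneg_left (add_one_le_exp (1 / n : ℝ)) ht0]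
  calc (1 : ℝ) ≤ (t * exp (1 / n)) ^ n := one_le_pow₀ hstep
    _ = exp 1 * t ^ n := by rw [mul_pow, ← exp_nat_mul, mul_one_div_cancel hn'.ne', mul_comm]

end

section
variable {ν : Measure ℝ}

theorem ae_restrict_Icc_mem_Ico (hone : ν {1} = 0) :
    ∀ᵐ t ∂ν.restrict (Icc (0 : ℝ) 1), t ∈ Ico (0 : ℝ) 1 := by
  filter_upwards [ae_restrict_mem measurableSet_Icc,
    ae_restrict_of_ae (measure_eq_zero_iff_ae_notMem.mp hone)] with t ht hne
  exact ⟨ht.1, ht.2.lt_of_ne hne⟩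

theorem setIntegral_le_setIntegral_of_subset {f : ℝ → ℝ} {s u : Set ℝ} (hu : MeasurableSet u)
    (hf : IntegrableOn f u ν) (hf0 : ∀ t ∈ u, 0 ≤ f t) (hsu : s ⊆ u) :
    ∫ t in s, f t ∂ν ≤ ∫ t in u, f t ∂ν :=
  setIntegral_mono_set hf (ae_restrict_of_forall_mem hu hf0) hsu.eventuallyLE

theorem setIntegral_Icc_eq_add_Ioc {f : ℝ → ℝ} {a b c : ℝ} (hab : a ≤ b) (hbc : b ≤ c)
    (hf : IntegrableOn f (Icc a c) ν) :
    ∫ t in Icc a c, f t ∂ν = ∫ t in Icc a b, f t ∂ν + ∫ t in Ioc b c, f t ∂ν := by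
  rw [← Icc_union_Ioc_eq_Icc hab hbc] at hf ⊢
  exact setIntegral_union ((Iic_disjoint_Ioc le_rfl).mono_left Icc_subset_Iic_self)
    measurableSet_Ioc (hf.mono_set subset_union_left) (hf.mono_set subset_union_right)

theorem integrableOn_pow_div_one_sub (hint : IntegrableOn (fun t : ℝ => (1 - t)⁻¹) (Icc 0 1) ν)
    (n : ℕ) : IntegrableOn (fun t : ℝ => t ^ n / (1 - t)) (Icc 0 1) ν := by
  refine Integrable.mono hint (by fun_prop : Measurable _).aestronglyMeasurable ?_
  filter_upwards [ae_restrict_mem measurableSet_Icc] with t ht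
  rw [norm_div, div_eq_mul_inv, norm_inv]
  refine mul_le_of_le_one_left (by positivity) ?_
  rw [norm_pow, Real.norm_of_nonneg ht.1]
  exact pow_le_one₀ ht.1 ht.2

theorem integrableOn_div_one_sub (hint : IntegrableOn (fun t : ℝ => (1 - t)⁻¹) (Icc 0 1) ν) :
    IntegrableOn (fun t : ℝ => t / (1 - t)) (Icc 0 1) ν := by
  simpa using integrableOn_pow_div_one_sub hint 1

theorem integrableOn_div_one_sub_sq [IsFiniteMeasureOnCompacts ν] {a x : ℝ} (hx : x < 1) :
    IntegrableOn (fun t : ℝ => t / (1 - t) ^ 2) (Icc a x) ν := by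
  refine ContinuousOn.integrableOn_Icc (continuousOn_id.div (by fun_prop) fun t ht => ?_)
  nlinarith [ht.2]

theorem hasSum_setIntegral_pow_add (hone : ν {1} = 0)
    (hint : IntegrableOn (fun t : ℝ => (1 - t)⁻¹) (Icc 0 1) ν) (n : ℕ) :
    HasSum (fun j : ℕ => ∫ t in Icc (0 : ℝ) 1, t ^ (n + j) ∂ν)
      (∫ t in Icc (0 : ℝ) 1, t ^ n / (1 - t) ∂ν) := by
  have hgeom : ∀ᵐ t ∂ν.restrict (Icc (0 : ℝ) 1),
      HasSum (fun j => t ^ (n + j)) (t ^ n / (1 - t)) := by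
    filter_upwards [ae_restrict_Icc_mem_Ico hone] with t ht
    simpa [pow_add, div_eq_mul_inv] using (hasSum_geometric_of_lt_one ht.1 ht.2).mul_left (t ^ n)
  refine hasSum_integral_of_dominated_convergence (fun j t => t ^ (n + j)) (fun j => by fun_prop)
    (fun j => ?_) (hgeom.mono fun t ht => ht.summable) ?_ hgeom
  · filter_upwards [ae_restrict_mem measurableSet_Icc] with t ht
    rw [Real.norm_of_nonneg (pow_nonneg ht.1 _)]
  · exact (integrableOn_pow_div_one_sub hint n).congr (hgeom.mono fun t ht => ht.tsum_eq.symm)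

theorem sum_mul_setIntegral_pow_eq [IsFiniteMeasureOnCompacts ν] (n : ℕ) :
    ∑ k ∈ Finset.Icc 1 n, (k : ℝ) * (∫ t in Icc (0 : ℝ) 1, t ^ k ∂ν) =
      ∫ t in Icc (0 : ℝ) 1, weightedGeomSum n t ∂ν := by
  simp_rw [weightedGeomSum, ← integral_const_mul]
  exact (integral_finsetSum _ fun k _ => (by fun_prop : Continuous _).integrableOn_Icc).symm

theorem setIntegral_Ioc_weightedGeomSum_le [IsFiniteMeasureOnCompacts ν] (hone : ν {1} = 0)
    (hint : IntegrableOn (fun t : ℝ => (1 - t)⁻¹) (Icc 0 1) ν) (n : ℕ) {x : ℝ} (hx : 0 ≤ x) :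
    ∫ t in Ioc x 1, weightedGeomSum n t ∂ν ≤ n * ∫ t in Icc x 1, t / (1 - t) ∂ν := by
  have hfrac := (integrableOn_div_one_sub hint).mono_set (Icc_subset_Icc_left hx)
  calc ∫ t in Ioc x 1, weightedGeomSum n t ∂ν ≤ ∫ t in Ioc x 1, n * (t / (1 - t)) ∂ν := by
        refine setIntegral_mono_on_ae (continuous_weightedGeomSum n).integrableOn_Ioc
          ((hfrac.mono_set Ioc_subset_Icc_self).const_mul _) measurableSet_Ioc ?_
        filter_upwards [measure_eq_zero_iff_ae_notMem.mp hone] with t hne ht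
        exact weightedGeomSum_le_mul_div_one_sub (hx.trans ht.1.le) (ht.2.lt_of_ne hne)
    _ = n * ∫ t in Ioc x 1, t / (1 - t) ∂ν := integral_const_mul _ _
    _ ≤ n * ∫ t in Icc x 1, t / (1 - t) ∂ν := by
        refine mul_le_mul_of_nonneg_left ?_ n.cast_nonneg
        exact setIntegral_le_setIntegral_of_subset measurableSet_Icc hfrac
          (fun t ht => div_nonneg (hx.trans ht.1) (sub_nonneg.2 ht.2)) Ioc_subset_Icc_self

theorem setIntegral_div_one_sub_le_exp_one_mul
    (hint : IntegrableOn (fun t : ℝ => (1 - t)⁻¹) (Icc 0 1) ν) {n : ℕ} {x : ℝ}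
    (hx : (n : ℝ) / (n + 1) ≤ x) :
    ∫ t in Icc x 1, t / (1 - t) ∂ν ≤ exp 1 * ∫ t in Icc 0 1, t ^ n / (1 - t) ∂ν := by
  have hxIcc : Icc x 1 ⊆ Icc 0 1 := Icc_subset_Icc_left (le_trans (by positivity) hx)
  have hpow := integrableOn_pow_div_one_sub hint n
  calc ∫ t in Icc x 1, t / (1 - t) ∂ν ≤ ∫ t in Icc x 1, exp 1 * (t ^ n / (1 - t)) ∂ν := by
        refine setIntegral_mono_on ((integrableOn_div_one_sub hint).mono_set hxIcc)
          ((hpow.mono_set hxIcc).const_mul _) measurableSet_Icc fun t ht => ?_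
        rw [← mul_div_assoc]
        exact div_le_div_of_nonneg_right (ht.2.trans (one_le_exp_one_mul_pow (hx.trans ht.1)))
          (sub_nonneg.2 ht.2)
    _ = exp 1 * ∫ t in Icc x 1, t ^ n / (1 - t) ∂ν := integral_const_mul _ _
    _ ≤ exp 1 * ∫ t in Icc 0 1, t ^ n / (1 - t) ∂ν := by
        refine mul_le_mul_of_nonneg_left ?_ (exp_pos 1).le
        exact setIntegral_le_setIntegral_of_subset measurableSet_Icc hpow
          (fun t ht => div_nonneg (pow_nonneg ht.1 n) (sub_nonneg.2 ht.2)) hxIcc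

theorem setIntegral_weightedGeomSum_le_of_integral_condition [IsFiniteMeasureOnCompacts ν]
    (hone : ν {1} = 0) (hint : IntegrableOn (fun t : ℝ => (1 - t)⁻¹) (Icc 0 1) ν)
    {L : ℝ} (hL : 0 ≤ L)
    (hcond : ∀ x ∈ Ico (0 : ℝ) 1, ∫ t in Icc (0 : ℝ) x, t / (1 - t) ^ 2 ∂ν ≤
      (L / (1 - x)) * ∫ t in Icc x 1, t / (1 - t) ∂ν)
    {n : ℕ} (hn : 1 ≤ n) :
    ∫ t in Icc (0 : ℝ) 1, weightedGeomSum n t ∂ν ≤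
      exp 1 * (2 * L + 1) * n * ∫ t in Icc (0 : ℝ) 1, t ^ n / (1 - t) ∂ν := by
  set x : ℝ := n / (n + 1)
  have hx0 : 0 ≤ x := by positivity
  have hx1 : x < 1 := by rw [div_lt_one (by positivity)]; linarith
  have hLx : L / (1 - x) = L * (n + 1) := by
    rw [show 1 - x = 1 / (n + 1) by simp only [x]; field_simp; ring, div_div_eq_mul_div, div_one]
  set B := ∫ t in Icc x 1, t / (1 - t) ∂ν
  have hB : 0 ≤ B := setIntegral_nonneg measurableSet_Icc fun t ht =>
    div_nonneg (hx0.trans ht.1) (sub_nonneg.2 ht.2)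
  have hlow : ∫ t in Icc 0 x, weightedGeomSum n t ∂ν ≤ L * (n + 1) * B := by
    refine (setIntegral_mono_on (continuous_weightedGeomSum n).integrableOn_Icc
      (integrableOn_div_one_sub_sq hx1) measurableSet_Icc
      fun t ht => weightedGeomSum_le_div_one_sub_sq ht.1 (ht.2.trans_lt hx1)).trans ?_
    simpa [hLx] using hcond x ⟨hx0, hx1⟩
  have hn' : (1 : ℝ) ≤ n := by exact_mod_cast hn
  calc ∫ t in Icc (0 : ℝ) 1, weightedGeomSum n t ∂ν
      = ∫ t in Icc 0 x, weightedGeomSum n t ∂ν + ∫ t in Ioc x 1, weightedGeomSum n t ∂ν :=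
        setIntegral_Icc_eq_add_Ioc hx0 hx1.le (continuous_weightedGeomSum n).integrableOn_Icc
    _ ≤ L * (n + 1) * B + n * B :=
        add_le_add hlow (setIntegral_Ioc_weightedGeomSum_le hone hint n hx0)
    _ ≤ (2 * L + 1) * n * B := by nlinarith [mul_nonneg hL hB]
    _ ≤ (2 * L + 1) * n * (exp 1 * ∫ t in Icc 0 1, t ^ n / (1 - t) ∂ν) := by
        gcongr
        exact setIntegral_div_one_sub_le_exp_one_mul hint le_rfl
    _ = _ := by ring

theorem mul_setIntegral_div_one_sub_sq_le_setIntegral_weightedGeomSum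
    [IsFiniteMeasureOnCompacts ν] {n : ℕ} {x ε : ℝ} (hx : x < 1)
    (hsmall : ∀ t ∈ Icc 0 x, t ^ n * (1 + n * (1 - t)) ≤ ε) :
    (1 - ε) * ∫ t in Icc (0 : ℝ) x, t / (1 - t) ^ 2 ∂ν ≤
      ∫ t in Icc (0 : ℝ) x, weightedGeomSum n t ∂ν := by
  rw [← integral_const_mul]
  exact setIntegral_mono_on ((integrableOn_div_one_sub_sq hx).const_mul _)
    (continuous_weightedGeomSum n).integrableOn_Icc measurableSet_Icc fun t ht =>
      mul_div_one_sub_sq_le_weightedGeomSum ht.1 (ht.2.trans_lt hx) (hsmall t ht)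

theorem succ_mul_setIntegral_pow_succ_div_le [IsFiniteMeasureOnCompacts ν]
    (hint : IntegrableOn (fun t : ℝ => (1 - t)⁻¹) (Icc 0 1) ν) {m : ℕ} {x ε : ℝ} (hx : x < 1)
    (hsmall : ∀ t ∈ Icc 0 x, t ^ m * (1 + m * (1 - t)) ≤ ε) :
    (m + 1) * ∫ t in Icc (0 : ℝ) x, t ^ (m + 1) / (1 - t) ∂ν ≤
      ε * ∫ t in Icc (0 : ℝ) x, t / (1 - t) ^ 2 ∂ν := by
  rw [← integral_const_mul, ← integral_const_mul]
  exact setIntegral_mono_on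
    (((integrableOn_pow_div_one_sub hint _).mono_set (Icc_subset_Icc_right hx.le)).const_mul _)
    ((integrableOn_div_one_sub_sq hx).const_mul _) measurableSet_Icc fun t ht =>
      succ_mul_pow_succ_div_le ht.1 (ht.2.trans_lt hx) (hsmall t ht)

theorem setIntegral_Ioc_pow_div_le (hint : IntegrableOn (fun t : ℝ => (1 - t)⁻¹) (Icc 0 1) ν)
    {n : ℕ} (hn : n ≠ 0) {x : ℝ} (hx : 0 ≤ x) :
    ∫ t in Ioc x 1, t ^ n / (1 - t) ∂ν ≤ ∫ t in Icc x 1, t / (1 - t) ∂ν := by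
  have hxIcc : Icc x 1 ⊆ Icc 0 1 := Icc_subset_Icc_left hx
  have hfrac := (integrableOn_div_one_sub hint).mono_set hxIcc
  refine (setIntegral_mono_on ((integrableOn_pow_div_one_sub hint n).mono_set
    (Ioc_subset_Icc_self.trans hxIcc)) (hfrac.mono_set Ioc_subset_Icc_self) measurableSet_Ioc
    fun t ht => ?_).trans ?_
  · exact div_le_div_of_nonneg_right (pow_le_of_le_one (hx.trans ht.1.le) ht.2 hn)
      (sub_nonneg.2 ht.2)
  · exact setIntegral_le_setIntegral_of_subset measurableSet_Icc hfrac
      (fun t ht => div_nonneg (hx.trans ht.1) (sub_nonneg.2 ht.2)) Ioc_subset_Icc_self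

theorem setIntegral_div_one_sub_sq_le_of_coeff [IsFiniteMeasureOnCompacts ν]
    (hint : IntegrableOn (fun t : ℝ => (1 - t)⁻¹) (Icc 0 1) ν)
    {D M x : ℝ} {m : ℕ} (hD : 0 ≤ D) (hM : 4 * (1 + D) ≤ M) (hx : 0 ≤ x)
    (hmx : M ≤ m * (1 - x))
    (hcoeff : ∫ t in Icc (0 : ℝ) 1, weightedGeomSum (m + 1) t ∂ν ≤
      D * (m + 1) * ∫ t in Icc (0 : ℝ) 1, t ^ (m + 1) / (1 - t) ∂ν) :
    ∫ t in Icc (0 : ℝ) x, t / (1 - t) ^ 2 ∂ν ≤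
      2 * D * (m + 1) * ∫ t in Icc x 1, t / (1 - t) ∂ν := by
  have hM0 : 0 < M := by linarith
  have hx1 : x < 1 := by
    by_contra! h
    nlinarith [m.cast_nonneg (α := ℝ)]
  set ε : ℝ := 2 / M
  have hε : ε * (1 + D) ≤ 1 / 2 := by
    rw [div_mul_eq_mul_div, div_le_iff₀ hM0]; linarith
  have hsmall : ∀ k, m ≤ k → ∀ t ∈ Icc 0 x, t ^ k * (1 + k * (1 - t)) ≤ ε := by
    intro k hk t ht
    refine (pow_mul_one_add_le ht.1 hM0.le ?_).trans (one_add_mul_exp_neg_le hM0)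
    calc M ≤ m * (1 - x) := hmx
      _ ≤ k * (1 - t) := by gcongr; linarith [ht.2]
  have hS : IntegrableOn (weightedGeomSum (m + 1)) (Icc 0 1) ν :=
    (continuous_weightedGeomSum _).integrableOn_Icc
  set A := ∫ t in Icc (0 : ℝ) x, t / (1 - t) ^ 2 ∂ν
  have hA : 0 ≤ A := setIntegral_nonneg measurableSet_Icc fun t ht =>
    div_nonneg ht.1 (sq_nonneg _)
  have hlower : (1 - ε) * A ≤ ∫ t in Icc 0 1, weightedGeomSum (m + 1) t ∂ν :=
    (mul_setIntegral_div_one_sub_sq_le_setIntegral_weightedGeomSum hx1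
      (by exact_mod_cast hsmall (m + 1) m.le_succ)).trans
    (setIntegral_le_setIntegral_of_subset measurableSet_Icc hS
      (fun t ht => weightedGeomSum_nonneg _ ht.1) (Icc_subset_Icc_right hx1.le))
  have hbody := succ_mul_setIntegral_pow_succ_div_le hint hx1 (hsmall m le_rfl)
  have htail := setIntegral_Ioc_pow_div_le hint m.succ_ne_zero hx
  rw [setIntegral_Icc_eq_add_Ioc hx hx1.le (integrableOn_pow_div_one_sub hint _)] at hcoeff
  have hDm : 0 ≤ D * (m + 1) := by positivity
  nlinarith [mul_le_mul_of_nonneg_left hbody hD, mul_le_mul_of_nonneg_left htail hDm,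
    mul_le_mul_of_nonneg_right hε hA]

theorem setIntegral_div_one_sub_sq_le_of_forall_coeff [IsFiniteMeasureOnCompacts ν]
    (hint : IntegrableOn (fun t : ℝ => (1 - t)⁻¹) (Icc 0 1) ν) {D : ℝ} (hD : 0 ≤ D)
    (hcoeff : ∀ n : ℕ, 1 ≤ n → ∫ t in Icc (0 : ℝ) 1, weightedGeomSum n t ∂ν ≤
      D * n * ∫ t in Icc (0 : ℝ) 1, t ^ n / (1 - t) ∂ν)
    {x : ℝ} (hx : x ∈ Ico (0 : ℝ) 1) :
    ∫ t in Icc (0 : ℝ) x, t / (1 - t) ^ 2 ∂ν ≤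
      (2 * D * (4 * (1 + D) + 2) / (1 - x)) * ∫ t in Icc x 1, t / (1 - t) ∂ν := by
  have h1x : 0 < 1 - x := by linarith [hx.2]
  set M : ℝ := 4 * (1 + D)
  set m : ℕ := ⌈M / (1 - x)⌉₊
  have hmx : M ≤ m * (1 - x) := (div_le_iff₀ h1x).mp (Nat.le_ceil _)
  have hm : (m : ℝ) + 1 ≤ (M + 2) / (1 - x) := by
    have hceil : (m : ℝ) < M / (1 - x) + 1 := Nat.ceil_lt_add_one (by positivity)
    have htwo : 2 ≤ 2 / (1 - x) := by rw [le_div_iff₀ h1x]; linarith [hx.1]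
    rw [add_div]
    linarith
  have hB : 0 ≤ ∫ t in Icc x 1, t / (1 - t) ∂ν := setIntegral_nonneg measurableSet_Icc
    fun t ht => div_nonneg (hx.1.trans ht.1) (sub_nonneg.2 ht.2)
  have hcoeff_succ := hcoeff (m + 1) m.succ_pos
  push_cast at hcoeff_succ
  calc ∫ t in Icc (0 : ℝ) x, t / (1 - t) ^ 2 ∂ν
      ≤ 2 * D * (m + 1) * ∫ t in Icc x 1, t / (1 - t) ∂ν :=
        setIntegral_div_one_sub_sq_le_of_coeff hint hD le_rfl hx.1 hmx hcoeff_succ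
    _ ≤ _ := by
        rw [mul_div_assoc]
        gcongr

end

theorem cm_bar_integral_iff_coeff_general (ν : Measure ℝ) [IsFiniteMeasure ν]
    (hone : ν {1} = 0)
    (hint : IntegrableOn (fun t : ℝ => (1 - t)⁻¹) (Icc 0 1) ν) :
    (∃ L : ℝ, 0 < L ∧ ∀ x ∈ Ico (0 : ℝ) 1,
        ∫ t in Icc (0 : ℝ) x, t / (1 - t) ^ 2 ∂ν ≤
          (L / (1 - x)) * ∫ t in Icc x 1, t / (1 - t) ∂ν) ↔
      (∃ D : ℝ, 0 < D ∧ ∀ n : ℕ, 1 ≤ n →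
        ∑ k ∈ Finset.Icc 1 n, (k : ℝ) * (∫ t in Icc (0 : ℝ) 1, t ^ k ∂ν) ≤
          D * n * ∑' j : ℕ, ∫ t in Icc (0 : ℝ) 1, t ^ (n + j) ∂ν) := by
  simp_rw [sum_mul_setIntegral_pow_eq, (hasSum_setIntegral_pow_add hone hint _).tsum_eq]
  constructor
  · rintro ⟨L, hL, hcond⟩
    exact ⟨exp 1 * (2 * L + 1), by positivity, fun n hn =>
      setIntegral_weightedGeomSum_le_of_integral_condition hone hint hL.le hcond hn⟩
  · rintro ⟨D, hD, hcoeff⟩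
    exact ⟨2 * D * (4 * (1 + D) + 2), by positivity, fun x hx =>
      setIntegral_div_one_sub_sq_le_of_forall_coeff hint hD.le hcoeff hx⟩

/-- For a CM probability measure `μ(n) = ∫₀¹ tⁿ ν(dt)`, the integral condition
on `ν` is equivalent to the coefficient condition
`Σ_{k=1}^n k μ(k) ≤ D n Σ_{k≥n} μ(k)`. -/
theorem cm_bar_integral_iff_coeff (ν : Measure ℝ) [IsFiniteMeasure ν]
    (hsupp : ν (Icc (0 : ℝ) 1)ᶜ = 0) (hone : ν {1} = 0)
    (hint : IntegrableOn (fun t : ℝ => (1 - t)⁻¹) (Icc 0 1) ν)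
    (hprob : ∫ t in Icc (0 : ℝ) 1, (1 - t)⁻¹ ∂ν = 1) :
    (∃ L : ℝ, 0 < L ∧ ∀ x ∈ Ico (0 : ℝ) 1,
        ∫ t in Icc (0 : ℝ) x, t / (1 - t) ^ 2 ∂ν ≤
          (L / (1 - x)) * ∫ t in Icc x 1, t / (1 - t) ∂ν) ↔
      (∃ D : ℝ, 0 < D ∧ ∀ n : ℕ, 1 ≤ n →
        ∑ k ∈ Finset.Icc 1 n, (k : ℝ) * (∫ t in Icc (0 : ℝ) 1, t ^ k ∂ν) ≤
          D * n * ∑' j : ℕ, ∫ t in Icc (0 : ℝ) 1, t ^ (n + j) ∂ν) :=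
  cm_bar_integral_iff_coeff_general ν hone hint
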